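/- Let G be a finite group, T an abelian subgroup of G, and θ : T → ℂˣ a group homomorphism. Let P = {C_G(s) : s ∈ T} be the (finite) poset of centralizers of elements of T, partially ordered by inclusion, and let μ denote its Möbius function. For a subgroup 𝔗' ∈ P define δ(θ, 𝔗') = |T ∩ C_G(𝔗')| if θ restricted to the subgroup T ∩ C_G(𝔗') is trivial, and δ(θ, 𝔗') = 0 otherwise. Then for every 𝔗 ∈ P one has ∑_{s ∈ T, C_G(s) = 𝔗} θ(s) = ∑_{𝔗' ∈ P, 𝔗 ⊆ 𝔗'} μ(𝔗, 𝔗') · δ(θ, 𝔗'). -/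

import Mathlib

/-! By orthogonality of characters, `δ(θ, K)` is the sum of `θ` over
`T ∩ C_G(K) = {t ∈ T : K ≤ C_G(t)}`, that is, the sum over all `K' ∈ P` above `K` of the
fibre sums `∑_{C_G(t) = K'} θ(t)`. Möbius inversion on `P` recovers each fibre sum. -/

open scoped Classical

theorem Subgroup.mem_centralizer_iff_le_centralizer_singleton {G : Type*} [Group G]
    (K : Subgroup G) (g : G) :
    g ∈ centralizer (K : Set G) ↔ K ≤ centralizer {g} := by
  simp only [SetLike.le_def, mem_centralizer_iff, Set.mem_singleton_iff, forall_eq,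
    SetLike.mem_coe]
  exact forall₂_congr fun _ _ => eq_comm

theorem MonoidHom.sum_filter_mem_units_coe {A R : Type*} [Group A] [Fintype A] [CommRing R]
    [IsDomain R] (χ : A →* Rˣ) (H : Subgroup A) :
    ∑ a with a ∈ H, (χ a : R) = if ∀ a ∈ H, χ a = 1 then (Nat.card H : R) else 0 := by
  let χH : H →* R := (Units.coeHom R).comp (χ.comp H.subtype)
  have hχH : χH = 1 ↔ ∀ a ∈ H, χ a = 1 := by
    simp [χH, DFunLike.ext_iff, Units.val_eq_one]
  rw [Finset.sum_subtype (p := (· ∈ H)) _ (fun x => Finset.mem_filter_univ x),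
    Nat.card_eq_fintype_card]
  exact (sum_hom_units χH).trans (by simp only [hχH]; split_ifs <;> simp)

section Mobius

variable {α R : Type*} [PartialOrder α] [CommRing R] (P : Finset α) (μ : α → α → R)

theorem Finset.sum_mobius_interval_eq_ite (hμdiag : ∀ a ∈ P, μ a a = 1)
    (hμsum : ∀ a ∈ P, ∀ b ∈ P, a < b →
      ∑ c ∈ P.filter (fun c => a ≤ c ∧ c ≤ b), μ a c = 0)
    {a b : α} (ha : a ∈ P) (hb : b ∈ P) :
    ∑ c ∈ P.filter (fun c => a ≤ c ∧ c ≤ b), μ a c = if a = b then 1 else 0 := by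
  split_ifs with hab
  · subst hab
    have : P.filter (fun c => a ≤ c ∧ c ≤ a) = {a} := by
      ext c
      simp only [mem_filter, mem_singleton]
      exact ⟨fun ⟨_, h₁, h₂⟩ => le_antisymm h₂ h₁,
        by rintro rfl; exact ⟨ha, le_rfl, le_rfl⟩⟩
    rw [this, sum_singleton, hμdiag a ha]
  · by_cases hle : a ≤ b
    · exact hμsum a ha b hb (lt_of_le_of_ne hle hab)
    · refine sum_eq_zero fun c hc => absurd ?_ hle
      exact (mem_filter.mp hc).2.1.trans (mem_filter.mp hc).2.2

theorem Finset.sum_fiber_eq_sum_mobius {ι : Type*} [Fintype ι] (hμdiag : ∀ a ∈ P, μ a a = 1)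
    (hμsum : ∀ a ∈ P, ∀ b ∈ P, a < b →
      ∑ c ∈ P.filter (fun c => a ≤ c ∧ c ≤ b), μ a c = 0)
    (f : ι → α) (hf : ∀ i, f i ∈ P) (w : ι → R) {a : α} (ha : a ∈ P) :
    ∑ i with f i = a, w i = ∑ K ∈ P with a ≤ K, μ a K * ∑ i with K ≤ f i, w i := by
  calc ∑ i with f i = a, w i
      = ∑ i, (∑ K ∈ P.filter (fun K => a ≤ K ∧ K ≤ f i), μ a K) * w i := by
        rw [sum_filter]
        refine sum_congr rfl fun i _ => ?_
        rw [sum_mobius_interval_eq_ite P μ hμdiag hμsum ha (hf i), ite_mul, one_mul,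
          zero_mul]
        exact if_congr eq_comm rfl rfl
    _ = ∑ i, ∑ K ∈ P with a ≤ K, if K ≤ f i then μ a K * w i else 0 := by
        refine sum_congr rfl fun i _ => ?_
        rw [sum_mul, ← filter_filter, sum_filter]
    _ = ∑ K ∈ P with a ≤ K, μ a K * ∑ i with K ≤ f i, w i := by
        rw [sum_comm]
        simp only [sum_filter, mul_sum, mul_ite, mul_zero]

end Mobius

theorem stmt2_general {G : Type*} [Group G] [Fintype G]
    (T : Subgroup G)
    (θ : T →* ℂˣ)
    (P : Finset (Subgroup G))
    (hP : ∀ K : Subgroup G, K ∈ P ↔ ∃ s ∈ T, Subgroup.centralizer {s} = K)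
    (μ : Subgroup G → Subgroup G → ℂ)
    (hμdiag : ∀ a ∈ P, μ a a = 1)
    (hμsum : ∀ a ∈ P, ∀ b ∈ P, a < b →
      ∑ c ∈ P.filter (fun c => a ≤ c ∧ c ≤ b), μ a c = 0)
    (δ : Subgroup G → ℂ)
    (hδ₁ : ∀ K : Subgroup G,
      (∀ t : T, (t : G) ∈ Subgroup.centralizer (K : Set G) → θ t = 1) →
        δ K = (Nat.card {t : T // (t : G) ∈ Subgroup.centralizer (K : Set G)} : ℂ))
    (hδ₂ : ∀ K : Subgroup G,
      ¬ (∀ t : T, (t : G) ∈ Subgroup.centralizer (K : Set G) → θ t = 1) → δ K = 0)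
    (𝔗 : Subgroup G) (h𝔗 : 𝔗 ∈ P) :
    ∑ t ∈ Finset.univ.filter (fun t : T => Subgroup.centralizer {(t : G)} = 𝔗),
        ((θ t : ℂˣ) : ℂ)
      = ∑ K ∈ P.filter (fun K => 𝔗 ≤ K), μ 𝔗 K * δ K := by
  have hδ : ∀ K : Subgroup G,
      δ K = ∑ t ∈ Finset.univ.filter (fun t : T => K ≤ Subgroup.centralizer {(t : G)}),
        (θ t : ℂ) := by
    intro K
    rw [Finset.filter_congr fun (t : T) _ =>
      (K.mem_centralizer_iff_le_centralizer_singleton t).symm]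
    refine Eq.trans ?_
      (θ.sum_filter_mem_units_coe ((Subgroup.centralizer (K : Set G)).subgroupOf T)).symm
    split_ifs with htriv
    · exact hδ₁ K htriv
    · exact hδ₂ K htriv
  simp only [hδ]
  exact P.sum_fiber_eq_sum_mobius μ hμdiag hμsum (fun t : T => Subgroup.centralizer {(t : G)})
    (fun t => (hP _).mpr ⟨t, t.2, rfl⟩) _ h𝔗

/-- Let `G` be a finite group, `T` an abelian subgroup, and
`θ : T → ℂˣ` a homomorphism. Let `P = {C_G(s) : s ∈ T}` be the poset of centralizers of
elements of `T`, ordered by inclusion, with Möbius function `μ` (characterized by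
`μ a a = 1` and `∑_{a ≤ c ≤ b} μ a c = 0` for `a < b`). For `𝔗' ∈ P` let
`δ 𝔗' = |T ∩ C_G(𝔗')|` if `θ` is trivial on `T ∩ C_G(𝔗')`, and `0` otherwise. Then for
every `𝔗 ∈ P`, `∑_{s ∈ T, C_G(s) = 𝔗} θ(s) = ∑_{𝔗' ∈ P, 𝔗 ⊆ 𝔗'} μ(𝔗,𝔗') · δ 𝔗'`. -/
theorem stmt2 {G : Type*} [Group G] [Fintype G]
    (T : Subgroup G) (hT : ∀ a ∈ T, ∀ b ∈ T, a * b = b * a)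
    (θ : T →* ℂˣ)
    (P : Finset (Subgroup G))
    (hP : ∀ K : Subgroup G, K ∈ P ↔ ∃ s ∈ T, Subgroup.centralizer {s} = K)
    (μ : Subgroup G → Subgroup G → ℂ)
    (hμdiag : ∀ a ∈ P, μ a a = 1)
    (hμsum : ∀ a ∈ P, ∀ b ∈ P, a < b →
      ∑ c ∈ P.filter (fun c => a ≤ c ∧ c ≤ b), μ a c = 0)
    (δ : Subgroup G → ℂ)
    (hδ₁ : ∀ K : Subgroup G,
      (∀ t : T, (t : G) ∈ Subgroup.centralizer (K : Set G) → θ t = 1) →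
        δ K = (Nat.card {t : T // (t : G) ∈ Subgroup.centralizer (K : Set G)} : ℂ))
    (hδ₂ : ∀ K : Subgroup G,
      ¬ (∀ t : T, (t : G) ∈ Subgroup.centralizer (K : Set G) → θ t = 1) → δ K = 0)
    (𝔗 : Subgroup G) (h𝔗 : 𝔗 ∈ P) :
    ∑ t ∈ Finset.univ.filter (fun t : T => Subgroup.centralizer {(t : G)} = 𝔗),
        ((θ t : ℂˣ) : ℂ)
      = ∑ K ∈ P.filter (fun K => 𝔗 ≤ K), μ 𝔗 K * δ K :=
  stmt2_general T θ P hP μ hμdiag hμsum δ hδ₁ hδ₂ 𝔗 h𝔗
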